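/- arXiv:1509.00382 — 2 statements merged into one kernel-verified Lean document; each statement's English description precedes it below -/
import Mathlib

section
/- Let n ≥ 2 be a natural number and let κ₁, κ₂ be real numbers with κ₁ ≠ κ₂. If (κ₁ − 1)·(n·κ₂ + 1 − 2n)² = (κ₂ − 1)·(n·κ₁ + 1 − 2n)², then (κ₁ − 1)·(κ₂ − 1) = (n − 1)²/n². -/
theorem sub_one_mul_sq_sub_sub_one_mul_sq {R : Type*} [CommRing R] (c a b : R) :
    (a - 1) * (c * b + 1 - 2 * c) ^ 2 - (b - 1) * (c * a + 1 - 2 * c) ^ 2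
      = (a - b) * ((c - 1) ^ 2 - c ^ 2 * ((a - 1) * (b - 1))) := by
  ring

theorem sub_one_mul_sub_one_eq_of_mul_sq_eq {K : Type*} [Field K] {c a b : K}
    (hc : c ≠ 0) (hab : a ≠ b)
    (h : (a - 1) * (c * b + 1 - 2 * c) ^ 2 = (b - 1) * (c * a + 1 - 2 * c) ^ 2) :
    (a - 1) * (b - 1) = (c - 1) ^ 2 / c ^ 2 := by
  have hfactor : (a - b) * ((c - 1) ^ 2 - c ^ 2 * ((a - 1) * (b - 1))) = 0 := by
    rw [← sub_one_mul_sq_sub_sub_one_mul_sq, h, sub_self]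
  have hprod : c ^ 2 * ((a - 1) * (b - 1)) = (c - 1) ^ 2 :=
    (sub_eq_zero.mp ((mul_eq_zero.mp hfactor).resolve_left (sub_ne_zero.mpr hab))).symm
  rw [eq_div_iff (pow_ne_zero 2 hc), mul_comm, hprod]

theorem stmt_0 (n : ℕ) (hn : 2 ≤ n) (κ₁ κ₂ : ℝ) (hne : κ₁ ≠ κ₂)
    (h : (κ₁ - 1) * ((n : ℝ) * κ₂ + 1 - 2 * n) ^ 2
        = (κ₂ - 1) * ((n : ℝ) * κ₁ + 1 - 2 * n) ^ 2) :
    (κ₁ - 1) * (κ₂ - 1) = ((n : ℝ) - 1) ^ 2 / (n : ℝ) ^ 2 := by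
  have hn₀ : (n : ℝ) ≠ 0 := by exact_mod_cast (by omega : n ≠ 0)
  exact sub_one_mul_sub_one_eq_of_mul_sq_eq hn₀ hne h
end

section
/- Let n ≥ 2 be a natural number and let F_n(κ) = (κ − 1)·(2n − 1)·(n − 1)/(n·κ + 1 − 2n)². Then for every real κ with κ ≠ 1 and κ ≠ (2n − 1)/n, setting κ' = 1 + (n − 1)²/(n²·(κ − 1)), the equality F_n(κ') = F_n(κ) holds. -/
theorem stmt_2 (n : ℕ) (hn : 2 ≤ n)
    (F : ℝ → ℝ)
    (hF : ∀ κ : ℝ, F κ = (κ - 1) * (2 * (n : ℝ) - 1) * ((n : ℝ) - 1)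
        / ((n : ℝ) * κ + 1 - 2 * n) ^ 2) :
    ∀ κ : ℝ, κ ≠ 1 → κ ≠ (2 * (n : ℝ) - 1) / n →
      F (1 + ((n : ℝ) - 1) ^ 2 / ((n : ℝ) ^ 2 * (κ - 1))) = F κ := by
  intro κ h1 h2
  have hn2 : (2 : ℝ) ≤ (n : ℝ) := by exact_mod_cast hn
  have ha : (n : ℝ) ≠ 0 := by linarith
  have ha1 : (n : ℝ) - 1 ≠ 0 := by intro h; linarith
  have hk : κ - 1 ≠ 0 := sub_ne_zero.mpr h1
  have hd : (n : ℝ) * κ + 1 - 2 * n ≠ 0 := by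
    intro h
    apply h2
    field_simp
    linarith
  have hd' : (n : ℝ) * (1 + ((n : ℝ) - 1) ^ 2 / ((n : ℝ) ^ 2 * (κ - 1))) + 1 - 2 * n ≠ 0 := by
    have heq : (n : ℝ) * (1 + ((n : ℝ) - 1) ^ 2 / ((n : ℝ) ^ 2 * (κ - 1))) + 1 - 2 * n
        = (((n : ℝ) - 1) * (2 * n - 1 - n * κ)) / ((n : ℝ) * (κ - 1)) := by
      field_simp
      ring
    rw [heq]
    exact div_ne_zero (mul_ne_zero ha1 (by intro h; apply hd; linarith))
      (mul_ne_zero ha hk)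
  rw [hF, hF]
  rw [div_eq_div_iff (pow_ne_zero 2 hd') (pow_ne_zero 2 hd)]
  field_simp
  ring
end
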